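/- Let Λ be an R-order of an étale K-algebra A and 𝔓₁,…,𝔓ᵣ pairwise coprime ideals of Λ. Then for each i, (𝔓ᵢ : 𝔓ᵢ) ∩ Σ_{j≠i} (𝔓ⱼ : 𝔓ⱼ) = Λ, where all colon sets are taken inside A. -/

import Mathlib

/-!
Elements of `Λ` lie in every colon set, and `Λ` splits off as a single summand, which gives `⊇`.
For `⊆`, coprimality of `𝔓ᵢ` with the other ideals gives `y ∈ ⋂_{j ≠ i} 𝔓ⱼ` with `1 - y ∈ 𝔓ᵢ`.
If `a = Σ_{j ≠ i} fⱼ` with `fⱼ ∈ (𝔓ⱼ : 𝔓ⱼ)`, then every `fⱼ y` lies in `Λ`, and if moreover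
`a ∈ (𝔓ᵢ : 𝔓ᵢ)` then `a (1 - y) ∈ Λ`, so `a = a (1 - y) + Σ fⱼ y ∈ Λ`.
-/

/-- The colon set `(I : I) = {a ∈ A | aI ⊆ I}` of an ideal `I` of the subalgebra
`Λ`, taken inside `A`. -/
def colonSet {R A : Type*} [CommRing R] [CommRing A] [Algebra R A]
    (Λ : Subalgebra R A) (I : Ideal Λ) : Set A :=
  {a : A | ∀ p : Λ, p ∈ I → ∃ q : Λ, q ∈ I ∧ a * (p : A) = (q : A)}

section ColonSet

variable {R A : Type*} [CommRing R] [CommRing A] [Algebra R A] {Λ : Subalgebra R A}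
  {I : Ideal Λ} {a : A}

lemma mem_colonSet_of_mem (ha : a ∈ Λ) : a ∈ colonSet Λ I :=
  fun p hp => ⟨⟨a, ha⟩ * p, I.mul_mem_left _ hp, rfl⟩

lemma mul_mem_of_mem_colonSet (ha : a ∈ colonSet Λ I) {p : Λ} (hp : p ∈ I) :
    a * (p : A) ∈ Λ := by
  obtain ⟨q, -, hq⟩ := ha p hp
  exact hq ▸ q.2

lemma mem_of_mem_colonSet_of_mul_mem (ha : a ∈ colonSet Λ I) {y : Λ} (hy : 1 - y ∈ I)
    (hay : a * (y : A) ∈ Λ) : a ∈ Λ := by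
  have hsplit : a = a * ((1 - y : Λ) : A) + a * (y : A) := by push_cast; ring
  rw [hsplit]
  exact Λ.add_mem (mul_mem_of_mem_colonSet ha hy) hay

lemma Ideal.exists_one_sub_mem_and_mem_biInf {S ι : Type*} [CommRing S] {I : Ideal S}
    {J : ι → Ideal S} {s : Finset ι} (hcop : ∀ j ∈ s, I ⊔ J j = ⊤) :
    ∃ y : S, 1 - y ∈ I ∧ ∀ j ∈ s, y ∈ J j := by
  have hcop' : IsCoprime I (⨅ j ∈ s, J j) :=
    Ideal.isCoprime_biInf fun j hj => Ideal.isCoprime_iff_sup_eq.mpr (hcop j hj)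
  obtain ⟨p, hp, y, hy, hpy⟩ := Ideal.isCoprime_iff_exists.mp hcop'
  refine ⟨y, ?_, fun j hj => ?_⟩
  · rwa [← hpy, add_sub_cancel_right]
  · simp only [Submodule.mem_iInf] at hy
    exact hy j hj

lemma mem_of_mem_colonSet_of_eq_sum {ι : Type*} {J : ι → Ideal Λ} {s : Finset ι}
    (hcop : ∀ j ∈ s, I ⊔ J j = ⊤) (ha : a ∈ colonSet Λ I) (f : ι → A)
    (hf : ∀ j ∈ s, f j ∈ colonSet Λ (J j)) (hsum : a = ∑ j ∈ s, f j) : a ∈ Λ := by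
  obtain ⟨y, hyI, hyJ⟩ := Ideal.exists_one_sub_mem_and_mem_biInf hcop
  refine mem_of_mem_colonSet_of_mul_mem ha hyI ?_
  rw [hsum, Finset.sum_mul]
  exact sum_mem fun j hj => mul_mem_of_mem_colonSet (hf j hj) (hyJ j hj)

end ColonSet

theorem statement15 {R : Type*} {A : Type u} [CommRing R] [CommRing A] [Algebra R A]
    (Λ : Subalgebra R A)
    {r : ℕ} (hr : 2 ≤ r) (𝔓 : Fin r → Ideal Λ)
    (hcop : ∀ i j, i ≠ j → 𝔓 i ⊔ 𝔓 j = ⊤) (i : Fin r) :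
    {a : A | a ∈ colonSet Λ (𝔓 i) ∧
        ∃ f : Fin r → A, (∀ j, j ≠ i → f j ∈ colonSet Λ (𝔓 j)) ∧ f i = 0 ∧
          a = ∑ j, f j} = (Λ : Set A) := by
  ext a
  constructor
  · rintro ⟨ha, f, hf, hfi, hsum⟩
    refine mem_of_mem_colonSet_of_eq_sum (s := Finset.univ.erase i)
      (fun j hj => hcop i j (Finset.ne_of_mem_erase hj).symm) ha f
      (fun j hj => hf j (Finset.ne_of_mem_erase hj)) ?_
    rwa [Finset.sum_erase _ hfi]
  · intro haΛ
    have : Nontrivial (Fin r) := Fin.nontrivial_iff_two_le.mpr hr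
    obtain ⟨j₀, hj₀⟩ := exists_ne i
    refine ⟨mem_colonSet_of_mem haΛ, Pi.single j₀ a, fun j _ => ?_,
      Pi.single_eq_of_ne (M := fun _ => A) hj₀.symm a, by simp⟩
    rcases eq_or_ne j j₀ with rfl | hj
    · simpa using mem_colonSet_of_mem haΛ
    · simpa [Pi.single_eq_of_ne hj] using mem_colonSet_of_mem Λ.zero_mem
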